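/- arXiv:2601.04884 — 4 statements merged into one kernel-verified Lean document; each statement's English description precedes it below -/
import Mathlib

section
/- For all real parameters ζ, α, β, Δ, the arrival-time function A[ζ, α, β, Δ] is monotone nondecreasing on the interval [ζ, β): for all t₁, t₂ ∈ ℝ with ζ ≤ t₁ ≤ t₂ < β, one has A[ζ, α, β, Δ](t₁) ≤ A[ζ, α, β, Δ](t₂) (the FIFO property: departing later never yields an earlier arrival). -/
/-- The arrival-time function `A[ζ, α, β, Δ] : ℝ → WithTop ℝ`:
`⊤` if `t < ζ`; `α + Δ` if `ζ ≤ t < min α β`; `t + Δ` if `α ≤ t < β`; `⊤` if `β ≤ t`. -/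
noncomputable def atf (ζ α β Δ : ℝ) (t : ℝ) : WithTop ℝ :=
  if t < ζ then ⊤
  else if t < min α β then ((α + Δ : ℝ) : WithTop ℝ)
  else if t < β then ((t + Δ : ℝ) : WithTop ℝ)
  else ⊤

section

variable {ζ α β Δ t : ℝ}

theorem atf_of_ge (h : ζ ≤ t) :
    atf ζ α β Δ t = if t < β then ((max α t + Δ : ℝ) : WithTop ℝ) else ⊤ := by
  rw [atf, if_neg h.not_gt]
  by_cases hβ : t < β
  · by_cases hα : t < α
    · rw [if_pos (lt_min hα hβ), if_pos hβ, max_eq_left hα.le]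
    · rw [if_neg fun h' => hα (h'.trans_le (min_le_left α β)), if_pos hβ, if_pos hβ,
        max_eq_right (not_lt.1 hα)]
  · rw [if_neg fun h' => hβ (h'.trans_le (min_le_right α β)), if_neg hβ, if_neg hβ]

theorem monotoneOn_atf : MonotoneOn (atf ζ α β Δ) (Set.Ici ζ) := by
  intro t₁ h₁ t₂ h₂ h₁₂
  rw [atf_of_ge h₁, atf_of_ge h₂]
  by_cases hβ : t₂ < β
  · rw [if_pos (h₁₂.trans_lt hβ), if_pos hβ]
    exact WithTop.coe_le_coe.2 (by gcongr)
  · rw [if_neg hβ]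
    exact le_top

end

theorem atf_mono_general (ζ α β Δ : ℝ) (t₁ t₂ : ℝ)
    (h₁ : ζ ≤ t₁) (h₁₂ : t₁ ≤ t₂) :
    atf ζ α β Δ t₁ ≤ atf ζ α β Δ t₂ :=
  monotoneOn_atf h₁ (h₁.trans h₁₂) h₁₂

/-- FIFO property: on `[ζ, β)` the arrival-time function is monotone nondecreasing. -/
theorem atf_mono (ζ α β Δ : ℝ) (t₁ t₂ : ℝ)
    (h₁ : ζ ≤ t₁) (h₁₂ : t₁ ≤ t₂) (h₂ : t₂ < β) :
    atf ζ α β Δ t₁ ≤ atf ζ α β Δ t₂ :=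
  atf_mono_general ζ α β Δ t₁ t₂ h₁ h₁₂
end

section
/- Let ζ, α, β, Δ, f be real numbers with α ≤ β and f ≥ 0. Then for every t ∈ ℝ, the pointwise minimum of the original arrival-time function A[ζ, α, β, Δ] and the flexible arrival-time function A[ζ, β, β + f, Δ] equals the single extended arrival-time function A[ζ, α, β + f, Δ]: min(A[ζ, α, β, Δ](t), A[ζ, β, β + f, Δ](t)) = A[ζ, α, β + f, Δ](t). In particular, adding flexibility f extends the safe departure window from [α, β) to [α, β + f). -/
theorem atf_of_le {ζ α β Δ : ℝ} (h : α ≤ β) (t : ℝ) :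
    atf ζ α β Δ t =
      if t < ζ then ⊤ else if t < α then ↑(α + Δ) else if t < β then ↑(t + Δ) else ⊤ := by
  rw [atf, min_eq_left h]

theorem atf_min_atf_of_le {ζ α β γ Δ : ℝ} (hαβ : α ≤ β) (hβγ : β ≤ γ) (t : ℝ) :
    min (atf ζ α β Δ t) (atf ζ β γ Δ t) = atf ζ α γ Δ t := by
  rw [atf_of_le hαβ, atf_of_le hβγ, atf_of_le (hαβ.trans hβγ)]
  rcases lt_or_ge t ζ with hζ | hζ
  · simp [hζ]
  rcases lt_or_ge t α with hα | hα
  · have hβ : t < β := hα.trans_le hαβ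
    simp [hζ.not_gt, hα, hβ, hαβ]
  rcases lt_or_ge t β with hβ | hβ
  · simp [hζ.not_gt, hα.not_gt, hβ, hβ.trans_le hβγ, hβ.le]
  rcases lt_or_ge t γ with hγ | hγ
  · simp [hζ.not_gt, hα.not_gt, hβ.not_gt, hγ]
  · simp [hζ.not_gt, hα.not_gt, hβ.not_gt, hγ.not_gt]

/-- Adding flexibility `f ≥ 0` extends the safe departure window from `[α, β)` to
`[α, β + f)`: the pointwise minimum of the original ATF and the flexible ATF
`A[ζ, β, β + f, Δ]` equals the single extended ATF `A[ζ, α, β + f, Δ]`. -/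
theorem atf_min_flexible (ζ α β Δ f : ℝ) (hαβ : α ≤ β) (hf : 0 ≤ f) (t : ℝ) :
    min (atf ζ α β Δ t) (atf ζ β (β + f) Δ t) = atf ζ α (β + f) Δ t :=
  atf_min_atf_of_le hαβ (le_add_of_nonneg_right hf) t
end

section
/- Maximality of flexibility: assume the trajectory is valid, t_n ≤ t_max, and b_i ≥ t_i for all i. Fix an index j and a delay d > f_j, and define the shifted arrival times t'_i for j ≤ i ≤ n by t'_j = t_j + d and t'_{i+1} = max(t_{i+1}, t'_i + δ(x_i, x_{i+1})). Then the delayed execution is unsafe: either t'_n > t_max, or there exists an index i with j ≤ i ≤ n such that t'_i > b_i (the agent would arrive at configuration x_i after another agent's next visit, violating the visiting order). -/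
/-!
Suppose the delayed execution were safe. Then the delay `t' i - t i` stays strictly above the
flexibility `f i` all the way from `j` to `n`: the minimum defining `f i` cannot be attained at
`b i - t i`, since `t' i ≤ b i`, so it is attained at the propagation term, and the delay
shrinks along an edge by at most the slack `t (i + 1) - t i - δ`. At `i = n` this gives
`tmax - t n < t' n - t n`.
-/

lemma lt_sub_of_min_lt_sub {τ τ' τ₁ τ₁' c φ φ₁ β : ℝ}
    (hφ : φ = min (τ₁ - τ - c + φ₁) (β - τ)) (hlt : φ < τ' - τ) (hβ : τ' ≤ β)
    (hstep : τ' + c ≤ τ₁') : φ₁ < τ₁' - τ₁ := by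
  rcases min_lt_iff.mp (hφ ▸ hlt) with h | h <;> linarith

lemma flexibility_lt_delay_of_safe (n : ℕ) (t t' b c f : ℕ → ℝ)
    (hf : ∀ i, 1 ≤ i → i < n → f i = min (t (i + 1) - t i - c i + f (i + 1)) (b i - t i))
    (j : ℕ) (hj1 : 1 ≤ j) (hj : f j < t' j - t j)
    (hstep : ∀ i, j ≤ i → i < n → t' i + c i ≤ t' (i + 1))
    (hsafe : ∀ i, j ≤ i → i < n → t' i ≤ b i) :
    ∀ i, j ≤ i → i ≤ n → f i < t' i - t i := by
  intro i hji
  induction i, hji using Nat.le_induction with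
  | base => exact fun _ => hj
  | succ i hji ih =>
    intro (hin : i < n)
    exact lt_sub_of_min_lt_sub (hf i (hj1.trans hji) hin) (ih hin.le) (hsafe i hji hin)
      (hstep i hji hin)

theorem flexibility_maximal_general {X : Type*} (n : ℕ)
    (x : ℕ → X) (t : ℕ → ℝ) (δ : X → X → ℝ)
    (tmax : ℝ)
    (b : ℕ → ℝ)
    (f : ℕ → ℝ)
    (hfn : f n = tmax - t n)
    (hf : ∀ i, 1 ≤ i → i < n →
      f i = min (t (i + 1) - t i - δ (x i) (x (i + 1)) + f (i + 1)) (b i - t i))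
    (j : ℕ) (hj1 : 1 ≤ j) (hjn : j ≤ n)
    (d : ℝ) (hd : f j < d)
    (t' : ℕ → ℝ)
    (ht'j : t' j = t j + d)
    (ht' : ∀ i, j ≤ i → i < n →
      t' (i + 1) = max (t (i + 1)) (t' i + δ (x i) (x (i + 1)))) :
    tmax < t' n ∨ ∃ i, j ≤ i ∧ i ≤ n ∧ b i < t' i := by
  by_contra! ⟨hend, hsafe⟩
  have hdelay := flexibility_lt_delay_of_safe n t t' b (fun i => δ (x i) (x (i + 1))) f hf j hj1
    (by linarith) (fun i hji hin => (ht' i hji hin).symm ▸ le_max_right _ _)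
    (fun i hji hin => hsafe i hji hin.le) n hjn le_rfl
  linarith

/-- Maximality of flexibility: delaying an agent at configuration `x j` by any
`d > f j`, with minimally shifted subsequent arrival times, is unsafe: either the
goal is reached after the scenario end time, or some configuration is reached after
another agent's next visit. -/
theorem flexibility_maximal {X : Type*} (n : ℕ) (hn : 1 ≤ n)
    (x : ℕ → X) (t : ℕ → ℝ) (δ : X → X → ℝ)
    (hδ : ∀ a b, 0 ≤ δ a b)
    (hvalid : ∀ i, 1 ≤ i → i < n → t i + δ (x i) (x (i + 1)) ≤ t (i + 1))
    (tmax : ℝ) (htmax : t n ≤ tmax)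
    (b : ℕ → ℝ) (hb : ∀ i, 1 ≤ i → i ≤ n → t i ≤ b i)
    (f : ℕ → ℝ)
    (hfn : f n = tmax - t n)
    (hf : ∀ i, 1 ≤ i → i < n →
      f i = min (t (i + 1) - t i - δ (x i) (x (i + 1)) + f (i + 1)) (b i - t i))
    (j : ℕ) (hj1 : 1 ≤ j) (hjn : j ≤ n)
    (d : ℝ) (hd : f j < d)
    (t' : ℕ → ℝ)
    (ht'j : t' j = t j + d)
    (ht' : ∀ i, j ≤ i → i < n →
      t' (i + 1) = max (t (i + 1)) (t' i + δ (x i) (x (i + 1)))) :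
    tmax < t' n ∨ ∃ i, j ≤ i ∧ i ≤ n ∧ b i < t' i :=
  flexibility_maximal_general n x t δ tmax b f hfn hf j hj1 hjn d hd t' ht'j ht'
end

section
/- Closed form for minimally shifted arrival times: assume the trajectory is valid, fix an index j and a delay d ≥ 0, and define the shifted arrival times t'_i for j ≤ i ≤ n by t'_j = t_j + d and t'_{i+1} = max(t_{i+1}, t'_i + δ(x_i, x_{i+1})). Then for all j ≤ i ≤ n, t'_i = max( t_i, t_j + d + Σ_{k=j}^{i−1} δ(x_k, x_{k+1}) ). -/
/-! Unroll the recursion by induction: adding `δ` distributes over the `max`, and validity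
`t i + δ ≤ t (i + 1)` absorbs the term `t i + δ` into `t (i + 1)`, leaving only the accumulated
delay `t j + d + Σ δ` to compete with `t (i + 1)`. -/

open Finset

lemma max_max_add_of_add_le {a b s c : ℝ} (h : a + c ≤ b) :
    max b (max a s + c) = max b (s + c) := by
  rw [← max_add_add_right, ← max_assoc, max_eq_left h]

lemma eq_max_add_sum_of_forall_eq_max {t t' w : ℕ → ℝ} {j n : ℕ} {d : ℝ} (hd : 0 ≤ d)
    (hvalid : ∀ i, j ≤ i → i < n → t i + w i ≤ t (i + 1))
    (hstart : t' j = t j + d)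
    (hstep : ∀ i, j ≤ i → i < n → t' (i + 1) = max (t (i + 1)) (t' i + w i)) :
    ∀ i, j ≤ i → i ≤ n → t' i = max (t i) (t j + d + ∑ k ∈ Ico j i, w k) := by
  intro i hji
  induction i, hji using Nat.le_induction with
  | base => simp [hstart, hd]
  | succ i hji ih =>
    intro hin
    rw [hstep i hji hin, ih (Nat.le_of_succ_le hin), sum_Ico_succ_top hji, ← add_assoc]
    exact max_max_add_of_add_le (hvalid i hji hin)

theorem shifted_arrival_closed_form_general {X : Type*} (n : ℕ)
    (x : ℕ → X) (t : ℕ → ℝ) (δ : X → X → ℝ)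
    (hvalid : ∀ i, 1 ≤ i → i < n → t i + δ (x i) (x (i + 1)) ≤ t (i + 1))
    (j : ℕ) (hj1 : 1 ≤ j)
    (d : ℝ) (hd : 0 ≤ d)
    (t' : ℕ → ℝ)
    (ht'j : t' j = t j + d)
    (ht' : ∀ i, j ≤ i → i < n →
      t' (i + 1) = max (t (i + 1)) (t' i + δ (x i) (x (i + 1)))) :
    ∀ i, j ≤ i → i ≤ n →
      t' i = max (t i) (t j + d + ∑ k ∈ Finset.Ico j i, δ (x k) (x (k + 1))) :=
  eq_max_add_sum_of_forall_eq_max hd (fun i hji hin => hvalid i (hj1.trans hji) hin) ht'j ht'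

/-- Closed form for the minimally shifted arrival times: along a valid trajectory,
delaying by `d ≥ 0` at index `j` and shifting minimally gives
`t' i = max (t i) (t j + d + Σ_{k=j}^{i-1} δ (x k) (x (k+1)))` for all `j ≤ i ≤ n`. -/
theorem shifted_arrival_closed_form {X : Type*} (n : ℕ)
    (x : ℕ → X) (t : ℕ → ℝ) (δ : X → X → ℝ)
    (hδ : ∀ a b, 0 ≤ δ a b)
    (hvalid : ∀ i, 1 ≤ i → i < n → t i + δ (x i) (x (i + 1)) ≤ t (i + 1))
    (j : ℕ) (hj1 : 1 ≤ j) (hjn : j ≤ n)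
    (d : ℝ) (hd : 0 ≤ d)
    (t' : ℕ → ℝ)
    (ht'j : t' j = t j + d)
    (ht' : ∀ i, j ≤ i → i < n →
      t' (i + 1) = max (t (i + 1)) (t' i + δ (x i) (x (i + 1)))) :
    ∀ i, j ≤ i → i ≤ n →
      t' i = max (t i) (t j + d + ∑ k ∈ Finset.Ico j i, δ (x k) (x (k + 1))) :=
  shifted_arrival_closed_form_general n x t δ hvalid j hj1 d hd t' ht'j ht'
end
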